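/- arXiv:1402.5361 — 2 statements merged into one kernel-verified Lean document; each statement's English description precedes it below -/
import Mathlib

section
/- Let d > s ≥ 3 and let h = (1, h_1, …, h_{s-1}) be the maximum, with respect to the total order <, of the set of finite O-sequences of multiplicity d-1 and length s. Then there exists an index 1 ≤ ı ≤ s-1 such that h + e_ı is a finite O-sequence; taking ı to be the largest such index, h + e_ı is the maximum with respect to < of the set of finite O-sequences of multiplicity d and length s, and the maximal genus among finite O-sequences of multiplicity d and length s equals the maximal genus among finite O-sequences of multiplicity d-1 and length s plus ı - 1. -/
/-!
If an O-sequence `k` of length `s` is not the `oLT`-maximum `X` of its multiplicity, it falls short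
of `X` at the top index where they differ and, the multiplicities being equal, exceeds `X` somewhere
below. Moving one unit from the highest such excess up to the next shortfall keeps the Macaulay
conditions (because `a ↦ a^⟨t⟩` is monotone), makes the sequence larger and does not lower the
genus. As there are finitely many O-sequences of given multiplicity, the maximum therefore has the
largest genus. The same move, applied after removing from `k` its top unit above `h`, shows that no
O-sequence of multiplicity `d` lies above `h + e_ı`.
-/

/-- The Macaulay bound `a^⟨t⟩`: if `a = C(k_t,t) + C(k_{t-1},t-1) + ⋯ + C(k_j,j)` is the
binomial expansion of `a` in base `t`, then `a^⟨t⟩ = C(k_t+1,t+1) + ⋯ + C(k_j+1,j+1)`.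
Computed greedily; `mac t a = a^⟨t⟩` for `t ≥ 1`. -/
def mac : ℕ → ℕ → ℕ
  | 0, _ => 0
  | t+1, a =>
    if a = 0 then 0
    else
      Nat.choose (Nat.findGreatest (fun n => Nat.choose n (t+1) ≤ a) (a + t + 1) + 1) (t+2) +
        mac t (a - Nat.choose (Nat.findGreatest (fun n => Nat.choose n (t+1) ≤ a) (a + t + 1)) (t+1))

/-- `h : ℕ → ℕ` is a finite O-sequence of length `s`: `h 0 = 1`, the entries `h 0, …, h (s-1)`
are positive, entries from index `s` on are zero, and `h (t+1) ≤ (h t)^⟨t⟩` for all `t ≥ 1`. -/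
def IsOSeq (h : ℕ → ℕ) (s : ℕ) : Prop :=
  h 0 = 1 ∧ (∀ i, 0 < h i ↔ i < s) ∧ ∀ t, 1 ≤ t → h (t + 1) ≤ mac t (h t)

/-- The multiplicity `e(h) = h_0 + ⋯ + h_{s-1}` of a finite O-sequence of length `s`. -/
def mult (h : ℕ → ℕ) (s : ℕ) : ℕ := ∑ i ∈ Finset.range s, h i

/-- The genus `g(h) = Σ_{j=2}^{s-1} (j-1)·h_j` of a finite O-sequence of length `s`. -/
def genus (h : ℕ → ℕ) (s : ℕ) : ℕ := ∑ j ∈ Finset.range s, (j - 1) * h j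

/-- The sequence obtained from `h` by increasing the `i`-th entry by `1`, i.e. `h + e_i`. -/
def addE (h : ℕ → ℕ) (i : ℕ) : ℕ → ℕ := fun j => if j = i then h j + 1 else h j

/-- The sequence obtained from `h` by decreasing the `i`-th entry by `1`, i.e. `h - e_i`. -/
def subE (h : ℕ → ℕ) (i : ℕ) : ℕ → ℕ := fun j => if j = i then h j - 1 else h j

/-- The total order on finite O-sequences of the same length: `oLT h k` iff `h_ℓ < k_ℓ`
where `ℓ = max{ j : h_j ≠ k_j }`. -/
def oLT (h k : ℕ → ℕ) : Prop := ∃ ℓ, h ℓ < k ℓ ∧ ∀ j, ℓ < j → h j = k j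

/-- The set of genera of finite O-sequences of multiplicity `d` and length `s`. -/
def genusSet (d s : ℕ) : Set ℕ := {g | ∃ h, IsOSeq h s ∧ mult h s = d ∧ genus h s = g}

/-- `G_d`: the set of genera of finite O-sequences of multiplicity `d` (of any length). -/
def GSet (d : ℕ) : Set ℕ := {g | ∃ h s, IsOSeq h s ∧ mult h s = d ∧ genus h s = g}

/-- `g` is a gap in `R_d = [0, C(d-1,2)]`: it lies in the range but is not the genus of any
finite O-sequence of multiplicity `d`. -/
def IsGap (d g : ℕ) : Prop :=
  g ≤ Nat.choose (d - 1) 2 ∧ ∀ h s, IsOSeq h s → mult h s = d → genus h s ≠ g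

/-- The O-sequence `(1, d-s+1, 1^{s-2})`, minimal in `𝒢_d^s`. -/
def minSeq (d s : ℕ) : ℕ → ℕ :=
  fun j => if j = 0 then 1 else if j = 1 then d - s + 1 else if j < s then 1 else 0

/-- The O-sequence `(1, 2^{d-s}, 1^{2s-d-1})`, maximal in `𝒢_d^s`. -/
def maxSeq (d s : ℕ) : ℕ → ℕ :=
  fun j => if j = 0 then 1 else if j ≤ d - s then 2 else if j < s then 1 else 0

/-- The O-sequence `(1, d-1)`. -/
def twoSeq (d : ℕ) : ℕ → ℕ := fun j => if j = 0 then 1 else if j = 1 then d - 1 else 0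

/-- The operation `h ↦ h - e_{s-1} + e_1` on a sequence of length `s`. -/
def downUp (h : ℕ → ℕ) (s : ℕ) : ℕ → ℕ :=
  fun j => if j = s - 1 then h j - 1 else if j = 1 then h j + 1 else h j

/-- The largest index `1 ≤ j ≤ s-1` with `h j > 1` (and `0` if there is none). -/
def topIdx (h : ℕ → ℕ) (s : ℕ) : ℕ := Nat.findGreatest (fun j => 1 < h j) (s - 1)

/-- The operation `h ↦ h - e_i + e_1` where `i = topIdx h s`. -/
def shiftDown (h : ℕ → ℕ) (s : ℕ) : ℕ → ℕ :=
  fun j => if j = topIdx h s then h j - 1 else if j = 1 then h j + 1 else h j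

/-- Auxiliary list `[m_n, m_{n-1}, …, m_1]` for the recursively defined sequence `(m_d)`. -/
def mListAux : ℕ → List ℕ
  | 0 => []
  | n+1 =>
    let prev := mListAux n
    let newVal :=
      if n = 0 then 0
      else
        (List.range' 2 (n - 1)).foldl
          (fun M k =>
            if Nat.choose k 2 - 1 ≤ M then max M (prev.getD (k - 1) 0 + Nat.choose k 2) else M)
          (prev.getD 0 0)
    newVal :: prev

/-- The sequence `(m_d)_{d ≥ 1}`: `m_1 = 0` and, for `d ≥ 2`, `m_d` is obtained from
`M := m_{d-1}` by running over `k = 2, …, d-1` and replacing `M` by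
`max M (m_{d-k} + C(k,2))` whenever `C(k,2) - 1 ≤ M`. -/
def mSeq (d : ℕ) : ℕ := (mListAux d).getD 0 0

/-- The index `k_t` of the leading term in the greedy expansion computed by `mac (t + 1)`. -/
def macIdx (t a : ℕ) : ℕ := Nat.findGreatest (fun n => n.choose (t + 1) ≤ a) (a + t + 1)

lemma mac_succ (t a : ℕ) : mac (t + 1) a =
    if a = 0 then 0
    else (macIdx t a + 1).choose (t + 2) + mac t (a - (macIdx t a).choose (t + 1)) :=
  rfl

lemma choose_macIdx_le (t a : ℕ) : (macIdx t a).choose (t + 1) ≤ a :=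
  Nat.findGreatest_spec (P := fun n => n.choose (t + 1) ≤ a) (Nat.zero_le _) (by simp)

lemma lt_choose_macIdx_succ (t a : ℕ) : a < (macIdx t a + 1).choose (t + 1) := by
  have hbound : a < (a + t + 1).choose (t + 1) := by
    induction t with
    | zero => simp
    | succ t ih => rw [← add_assoc, Nat.choose_succ_succ']; omega
  by_contra! hle
  have hK : macIdx t a < a + t + 1 := by
    refine lt_of_le_of_ne (Nat.findGreatest_le _) fun hK => ?_
    have := choose_macIdx_le t a
    rw [hK] at this
    omega
  exact Nat.findGreatest_is_greatest (Nat.lt_succ_self _) hK hle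

lemma macIdx_mono (t : ℕ) {a b : ℕ} (hab : a ≤ b) : macIdx t a ≤ macIdx t b :=
  Nat.findGreatest_mono (fun _ hn => hn.trans hab) (by omega)

lemma mac_lt_choose : ∀ (t : ℕ) {a k : ℕ}, a < k.choose t → mac t a < (k + 1).choose (t + 1)
  | 0, _, k, _ => by simp [mac]
  | t + 1, a, k, hak => by
    rw [mac_succ]
    split_ifs with ha
    · refine Nat.choose_pos (not_lt.mp fun hk => ?_)
      rw [Nat.choose_eq_zero_of_lt (by omega : k < t + 1)] at hak
      omega
    have hlow := choose_macIdx_le t a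
    have hup := lt_choose_macIdx_succ t a
    generalize macIdx t a = K at hlow hup ⊢
    have hKk : K < k := by
      by_contra! h
      have := Nat.choose_le_choose (t + 1) h
      omega
    have hrem : a - K.choose (t + 1) < K.choose t := by
      rw [Nat.choose_succ_succ'] at hup
      omega
    calc (K + 1).choose (t + 2) + mac t (a - K.choose (t + 1))
        < (K + 1).choose (t + 2) + (K + 1).choose (t + 1) := by
          have := mac_lt_choose t hrem; omega
      _ = (K + 2).choose (t + 2) := by rw [Nat.choose_succ_succ' (K + 1) (t + 1)]; ring
      _ ≤ (k + 1).choose (t + 2) := Nat.choose_le_choose _ (by omega)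

lemma mac_monotone : ∀ t, Monotone (mac t)
  | 0 => fun _ _ _ => le_rfl
  | t + 1 => fun a b hab => by
    rcases Nat.eq_zero_or_pos a with rfl | ha
    · simp [mac_succ]
    rcases (macIdx_mono t hab).eq_or_lt with heq | hlt
    · rw [mac_succ, mac_succ, if_neg (by omega), if_neg (by omega), heq]
      gcongr
      exact mac_monotone t (by omega)
    · calc mac (t + 1) a ≤ (macIdx t a + 2).choose (t + 2) :=
            (mac_lt_choose (t + 1) (lt_choose_macIdx_succ t a)).le
        _ ≤ (macIdx t b + 1).choose (t + 2) := Nat.choose_le_choose _ (by omega)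
        _ ≤ mac (t + 1) b := by rw [mac_succ, if_neg (by omega)]; omega

lemma addE_apply (k : ℕ → ℕ) (i j : ℕ) : addE k i j = if j = i then k j + 1 else k j := rfl

lemma subE_apply (k : ℕ → ℕ) (i j : ℕ) : subE k i j = if j = i then k j - 1 else k j := rfl

lemma addE_subE {k : ℕ → ℕ} {i : ℕ} (hi : 0 < k i) : addE (subE k i) i = k := by
  ext j
  simp only [addE_apply, subE_apply]
  split_ifs with h <;> subst_vars <;> omega

lemma sum_mul_addE (w k : ℕ → ℕ) {s i : ℕ} (hi : i < s) :
    ∑ j ∈ Finset.range s, w j * addE k i j = ∑ j ∈ Finset.range s, w j * k j + w i := by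
  have hterm : ∀ j, w j * addE k i j = w j * k j + if j = i then w i else 0 := by
    intro j
    simp only [addE_apply]
    split_ifs <;> subst_vars <;> ring
  simp only [hterm, Finset.sum_add_distrib, Finset.sum_ite_eq', Finset.mem_range, hi, if_true]

lemma mult_addE {k : ℕ → ℕ} {s i : ℕ} (hi : i < s) : mult (addE k i) s = mult k s + 1 := by
  simpa [mult] using sum_mul_addE (fun _ => 1) k hi

lemma genus_addE {k : ℕ → ℕ} {s i : ℕ} (hi : i < s) :
    genus (addE k i) s = genus k s + (i - 1) :=
  sum_mul_addE (fun j => j - 1) k hi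

namespace IsOSeq

variable {k X : ℕ → ℕ} {s : ℕ}

lemma pos (hk : IsOSeq k s) {i : ℕ} (hi : i < s) : 0 < k i := (hk.2.1 i).mpr hi

lemma lt_of_pos (hk : IsOSeq k s) {i : ℕ} (hi : 0 < k i) : i < s := (hk.2.1 i).mp hi

lemma eq_zero (hk : IsOSeq k s) {i : ℕ} (hi : s ≤ i) : k i = 0 :=
  Nat.eq_zero_of_not_pos fun h => (hk.lt_of_pos h).not_ge hi

lemma apply_le_mult (hk : IsOSeq k s) (i : ℕ) : k i ≤ mult k s := by
  rcases lt_or_ge i s with hi | hi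
  · exact Finset.single_le_sum (fun j _ => Nat.zero_le (k j)) (Finset.mem_range.mpr hi)
  · simp [hk.eq_zero hi]

lemma exists_ne_forall_gt_eq (hk : IsOSeq k s) (hX : IsOSeq X s) (hne : k ≠ X) :
    ∃ p, k p ≠ X p ∧ ∀ j, p < j → k j = X j := by
  obtain ⟨j, hj⟩ := Function.ne_iff.mp hne
  have hjs : j ≤ s := by
    by_contra! h
    exact hj (by rw [hk.eq_zero h.le, hX.eq_zero h.le])
  refine ⟨Nat.findGreatest (fun i => k i ≠ X i) s,
    Nat.findGreatest_spec (P := fun i => k i ≠ X i) hjs hj, fun i hi => ?_⟩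
  rcases le_or_gt i s with his | his
  · exact not_not.mp (Nat.findGreatest_is_greatest hi his)
  · rw [hk.eq_zero his.le, hX.eq_zero his.le]

lemma oLT_or_oLT (hk : IsOSeq k s) (hX : IsOSeq X s) (hne : k ≠ X) : oLT k X ∨ oLT X k := by
  obtain ⟨p, hp, habove⟩ := hk.exists_ne_forall_gt_eq hX hne
  rcases hp.lt_or_gt with hlt | hgt
  · exact Or.inl ⟨p, hlt, habove⟩
  · exact Or.inr ⟨p, hgt, fun j hj => (habove j hj).symm⟩

end IsOSeq

lemma oLT_irrefl (a : ℕ → ℕ) : ¬ oLT a a := fun ⟨_, h, _⟩ => h.false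

lemma oLT_trans {a b c : ℕ → ℕ} (hab : oLT a b) (hbc : oLT b c) : oLT a c := by
  obtain ⟨l, hl, habove⟩ := hab
  obtain ⟨l', hl', hbc⟩ := hbc
  rcases lt_trichotomy l l' with h | rfl | h
  · exact ⟨l', habove l' h ▸ hl', fun j hj => (habove j (h.trans hj)).trans (hbc j hj)⟩
  · exact ⟨l, hl.trans hl', fun j hj => (habove j hj).trans (hbc j hj)⟩
  · exact ⟨l, (hbc l h).symm ▸ hl, fun j hj => (habove j hj).trans (hbc j (h.trans hj))⟩

lemma oLT_asymm {a b : ℕ → ℕ} (hab : oLT a b) : ¬ oLT b a :=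
  fun hba => oLT_irrefl a (oLT_trans hab hba)

def IsOSeqMax (X : ℕ → ℕ) (e s : ℕ) : Prop :=
  IsOSeq X s ∧ mult X s = e ∧ ∀ k, IsOSeq k s → mult k s = e → k ≠ X → oLT k X

lemma finite_setOf_isOSeq_mult (e s : ℕ) : {k | IsOSeq k s ∧ mult k s = e}.Finite := by
  refine Set.Finite.of_finite_image (f := fun k (i : Fin s) => k i) ?_ ?_
  · refine (Set.Finite.pi fun _ => Set.finite_Iic e).subset ?_
    rintro _ ⟨k, ⟨hk, rfl⟩, rfl⟩
    exact fun i _ => hk.apply_le_mult i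
  · rintro k ⟨hk, -⟩ X ⟨hX, -⟩ hkX
    ext j
    rcases lt_or_ge j s with hj | hj
    · exact congrFun hkX ⟨j, hj⟩
    · rw [hk.eq_zero hj, hX.eq_zero hj]

lemma induction_oLT {e s : ℕ} {P : (ℕ → ℕ) → Prop}
    (step : ∀ k, IsOSeq k s → mult k s = e →
      (∀ k', IsOSeq k' s → mult k' s = e → oLT k k' → P k') → P k) :
    ∀ k, IsOSeq k s → mult k s = e → P k := by
  have : IsStrictOrder (ℕ → ℕ) (fun a b => oLT b a) :=
    { irrefl := oLT_irrefl, trans := fun _ _ _ hab hbc => oLT_trans hbc hab }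
  intro k hk hmk
  exact (finite_setOf_isOSeq_mult e s).wellFoundedOn.induction (r := fun a b => oLT b a)
    ⟨hk, hmk⟩ fun k hk ih => step k hk.1 hk.2 fun k' hk' hmk' hkk' => ih k' ⟨hk', hmk'⟩ hkk'

lemma isOSeq_addE {k : ℕ → ℕ} {s i : ℕ} (hk : IsOSeq k s) (hi0 : i ≠ 0) (his : i < s)
    (hcond : ∀ t, 1 ≤ t → t + 1 = i → k i < mac t (k t)) : IsOSeq (addE k i) s := by
  refine ⟨by rw [addE_apply, if_neg (Ne.symm hi0), hk.1], fun j => ?_, fun t ht => ?_⟩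
  · rw [addE_apply]
    split_ifs with hj
    · subst hj; simp [his]
    · exact hk.2.1 j
  · have hstep := hk.2.2 t ht
    have hmono := mac_monotone t (Nat.le_add_right (k t) 1)
    simp only [addE_apply]
    split_ifs with h1 h2 h2
    · omega
    · subst h1; exact hcond t ht rfl
    · omega
    · exact hstep

lemma isOSeq_subE {k : ℕ → ℕ} {s p : ℕ} (hk : IsOSeq k s) (hp0 : p ≠ 0) (hp : 2 ≤ k p)
    (hcond : k (p + 1) ≤ mac p (k p - 1)) : IsOSeq (subE k p) s := by
  refine ⟨by rw [subE_apply, if_neg (Ne.symm hp0), hk.1], fun j => ?_, fun t ht => ?_⟩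
  · rw [subE_apply]
    split_ifs with hj
    · subst hj; simp [hk.lt_of_pos (by omega : 0 < k j)]; omega
    · exact hk.2.1 j
  · have hstep := hk.2.2 t ht
    simp only [subE_apply]
    split_ifs with h1 h2 h2
    · omega
    · omega
    · exact h2 ▸ hcond
    · exact hstep

/-- On `[m, j]` the Macaulay conditions of the new sequence follow from those of `X`, elsewhere
from those of `k`. -/
lemma isOSeq_addE_subE {k X : ℕ → ℕ} {s m j : ℕ} (hk : IsOSeq k s) (hX : IsOSeq X s)
    (hmj : m < j) (hjs : j < s) (hm : X m < k m) (hj : k j < X j)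
    (hbetween : ∀ t, m < t → t < j → k t = X t) : IsOSeq (addE (subE k m) j) s := by
  set N := addE (subE k m) j
  have hm0 : m ≠ 0 := by rintro rfl; rw [hk.1, hX.1] at hm; omega
  have hXm := hX.pos (hmj.trans hjs)
  have hN : ∀ i, N i = if i = j then k i + 1 else if i = m then k i - 1 else k i := by
    intro i
    simp only [N, addE_apply, subE_apply]
    split_ifs <;> omega
  have hX_le : ∀ i, m ≤ i → i < j → X i ≤ N i := by
    intro i h1 h2
    rw [hN]
    split_ifs <;> subst_vars <;> first | omega | exact (hbetween i (by omega) h2).ge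
  have hle_X : ∀ i, m < i → i ≤ j → N i ≤ X i := by
    intro i h1 h2
    rw [hN]
    split_ifs <;> subst_vars <;> first | omega | exact (hbetween i h1 (by omega)).le
  have hk_le : ∀ i, i ≠ m → k i ≤ N i := by intro i hi; rw [hN]; split_ifs <;> omega
  have hle_k : ∀ i, i ≠ j → N i ≤ k i := by intro i hi; rw [hN]; split_ifs <;> omega
  refine ⟨by rw [hN, if_neg (by omega), if_neg (Ne.symm hm0), hk.1], fun i => ?_,
    fun t ht => ?_⟩
  · rw [hN]
    split_ifs with h1 h2
    · subst h1; simp [hjs]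
    · subst h2; simp only [hmj.trans hjs, iff_true]; omega
    · exact hk.2.1 i
  · by_cases hmt : m ≤ t ∧ t < j
    · exact (hle_X _ (by omega) (by omega)).trans
        ((hX.2.2 t ht).trans (mac_monotone t (hX_le t hmt.1 hmt.2)))
    · exact (hle_k _ (by omega)).trans
        ((hk.2.2 t ht).trans (mac_monotone t (hk_le t (by omega))))

lemma exists_lt_of_mult_eq {k X : ℕ → ℕ} {s q : ℕ} (hmult : mult k s = mult X s)
    (hqs : q < s) (hq : k q < X q) (habove : ∀ j, q < j → k j = X j) :
    ∃ m < q, X m < k m := by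
  by_contra! hbelow
  refine hmult.not_lt (Finset.sum_lt_sum (fun i _ => ?_) ⟨q, Finset.mem_range.mpr hqs, hq⟩)
  rcases lt_trichotomy i q with hi | rfl | hi
  · exact hbelow i hi
  · exact hq.le
  · exact (habove i hi).le

lemma exists_exchange_indices {k X : ℕ → ℕ} {q m₀ : ℕ} (hq : k q < X q) (hm₀ : m₀ < q)
    (hXm₀ : X m₀ < k m₀) :
    ∃ m j, m < j ∧ j ≤ q ∧ X m < k m ∧ k j < X j ∧
      ∀ t, m < t → t < j → k t = X t := by
  classical
  set m := Nat.findGreatest (fun t => X t < k t) q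
  have hm : X m < k m := Nat.findGreatest_spec (P := fun t => X t < k t) hm₀.le hXm₀
  have hmq : m < q := lt_of_le_of_ne (Nat.findGreatest_le q) fun h => by rw [h] at hm; omega
  have hle : ∀ t, m < t → t ≤ q → k t ≤ X t :=
    fun t h1 h2 => not_lt.mp (Nat.findGreatest_is_greatest (P := fun t => X t < k t) h1 h2)
  have hex : ∃ j, m < j ∧ k j < X j := ⟨q, hmq, hq⟩
  obtain ⟨hmj, hj⟩ := Nat.find_spec hex
  have hjq : Nat.find hex ≤ q := Nat.find_min' hex ⟨hmq, hq⟩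
  refine ⟨m, Nat.find hex, hmj, hjq, hm, hj, fun t h1 h2 => ?_⟩
  have := Nat.find_min hex h2
  have := hle t h1 (by omega)
  omega

lemma exists_oLT_genus_le {k X : ℕ → ℕ} {s q m₀ : ℕ} (hk : IsOSeq k s) (hX : IsOSeq X s)
    (hqs : q < s) (hq : k q < X q) (hm₀ : m₀ < q) (hXm₀ : X m₀ < k m₀) :
    ∃ k', IsOSeq k' s ∧ mult k' s = mult k s ∧ oLT k k' ∧ genus k s ≤ genus k' s := by
  obtain ⟨m, j, hmj, hjq, hm, hj, hbetween⟩ := exists_exchange_indices hq hm₀ hXm₀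
  have hjs : j < s := by omega
  have hkm : 0 < k m := by omega
  refine ⟨addE (subE k m) j, isOSeq_addE_subE hk hX hmj hjs hm hj hbetween, ?_, ?_, ?_⟩
  · conv_rhs => rw [← addE_subE hkm]
    rw [mult_addE hjs, mult_addE (hmj.trans hjs)]
  · refine ⟨j, by simp [addE_apply, subE_apply, hmj.ne'], fun t ht => ?_⟩
    simp [addE_apply, subE_apply, ht.ne', (hmj.trans ht).ne']
  · conv_lhs => rw [← addE_subE hkm]
    rw [genus_addE hjs, genus_addE (hmj.trans hjs)]
    omega

namespace IsOSeqMax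

variable {X h : ℕ → ℕ} {e s : ℕ}

lemma isGreatest_genusSet (hX : IsOSeqMax X e s) : IsGreatest (genusSet e s) (genus X s) := by
  refine ⟨⟨X, hX.1, hX.2.1, rfl⟩, ?_⟩
  rintro _ ⟨k, hk, hmk, rfl⟩
  refine induction_oLT (P := fun k => genus k s ≤ genus X s) (fun k hk hmk ih => ?_) k hk hmk
  by_cases hkX : k = X
  · rw [hkX]
  obtain ⟨q, hq, habove⟩ := hX.2.2 k hk hmk hkX
  have hqs := hX.1.lt_of_pos (by omega : 0 < X q)
  obtain ⟨m₀, hm₀, hXm₀⟩ := exists_lt_of_mult_eq (hmk.trans hX.2.1.symm) hqs hq habove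
  obtain ⟨k', hk', hmk', hkk', hgenus⟩ := exists_oLT_genus_le hk hX.1 hqs hq hm₀ hXm₀
  exact hgenus.trans (ih k' hk' (hmk'.trans hmk) hkk')

/-- Strip the top unit where `k` differs from `h`, compare the result with the maximum `h`, and
move a unit of `k` upwards. -/
lemma exists_oLT_of_addE_oLT {i : ℕ} (hh : IsOSeqMax h e s)
    (hlast : ∀ j, i < j → ¬ IsOSeq (addE h j) s) {k : ℕ → ℕ} (hk : IsOSeq k s)
    (hmk : mult k s = e + 1) (hik : oLT (addE h i) k) :
    ∃ k', IsOSeq k' s ∧ mult k' s = e + 1 ∧ oLT k k' := by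
  obtain ⟨hOh, hmh, hmax⟩ := hh
  obtain ⟨p, hp, habove⟩ := hk.exists_ne_forall_gt_eq hOh (by rintro rfl; omega)
  have hip : i ≤ p := by
    by_contra! hpi
    refine oLT_asymm hik ⟨i, ?_, fun j hj => ?_⟩
    · rw [habove i hpi, addE_apply, if_pos rfl]; omega
    · rw [habove j (hpi.trans hj), addE_apply, if_neg hj.ne']
  have hhp : h p < k p := by
    refine hp.lt_or_gt.resolve_left fun hkp => oLT_asymm hik ⟨p, ?_, fun j hj => ?_⟩
    · rw [addE_apply]; split_ifs <;> omega
    · rw [habove j hj, addE_apply, if_neg (by omega)]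
  have hps : p < s := hk.lt_of_pos (by omega)
  have hp0 : p ≠ 0 := by rintro rfl; rw [hk.1, hOh.1] at hhp; omega
  have hkp : 0 < k p := by omega
  have hsub : IsOSeq (subE k p) s := by
    refine isOSeq_subE hk hp0 (by have := hOh.pos hps; omega) ?_
    rw [habove (p + 1) (by omega)]
    exact (hOh.2.2 p (by omega)).trans (mac_monotone p (by omega))
  have hmsub : mult (subE k p) s = e := by
    have := mult_addE (k := subE k p) hps
    rw [addE_subE hkp] at this
    omega
  by_cases hsubh : subE k p = h
  · have hkeq : k = addE h p := by rw [← hsubh, addE_subE hkp]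
    have hpi : p = i := le_antisymm (not_lt.mp fun hlt => hlast p hlt (hkeq ▸ hk)) hip
    subst hkeq hpi
    exact (oLT_irrefl _ hik).elim
  obtain ⟨q, hq, hqabove⟩ := hmax _ hsub hmsub hsubh
  have hsubk : ∀ j, j < p → subE k p j = k j := fun j hj => by rw [subE_apply, if_neg hj.ne]
  have hqp : q < p := by
    rcases lt_trichotomy q p with hlt | rfl | hgt
    · exact hlt
    · rw [subE_apply, if_pos rfl] at hq; omega
    · rw [subE_apply, if_neg hgt.ne', habove q hgt] at hq; omega
  have hqs : q < s := hqp.trans hps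
  obtain ⟨m₀, hm₀, hhm₀⟩ := exists_lt_of_mult_eq (hmsub.trans hmh.symm) hqs hq hqabove
  rw [hsubk q hqp] at hq
  rw [hsubk m₀ (hm₀.trans hqp)] at hhm₀
  obtain ⟨k', hk', hmk', hkk', -⟩ := exists_oLT_genus_le hk hOh hqs hq hm₀ hhm₀
  exact ⟨k', hk', hmk'.trans hmk, hkk'⟩

end IsOSeqMax

lemma isOSeqMax_addE {h : ℕ → ℕ} {e s i : ℕ} (hh : IsOSeqMax h e s)
    (hi : IsOSeq (addE h i) s) (hlast : ∀ j, i < j → ¬ IsOSeq (addE h j) s) :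
    IsOSeqMax (addE h i) (e + 1) s := by
  have his : i < s := hi.lt_of_pos (by simp [addE_apply])
  refine ⟨hi, by rw [mult_addE his, hh.2.1], fun k hk hmk hne => ?_⟩
  refine (hk.oLT_or_oLT hi hne).resolve_right ?_
  refine induction_oLT (P := fun k => ¬ oLT (addE h i) k) (fun k hk hmk ih hik => ?_) k hk hmk
  obtain ⟨k', hk', hmk', hkk'⟩ := hh.exists_oLT_of_addE_oLT hlast hk hmk hik
  exact ih k' hk' hmk' hkk' (oLT_trans hik hkk')

theorem stmt8_general (d s : ℕ) (h : ℕ → ℕ) (hs : 3 ≤ s)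
    (hOh : IsOSeq h s) (heh : mult h s = d - 1)
    (hmax : ∀ k : ℕ → ℕ, IsOSeq k s → mult k s = d - 1 → k ≠ h → oLT k h) :
    (∃ i, 1 ≤ i ∧ i ≤ s - 1 ∧ IsOSeq (addE h i) s) ∧
    (∀ imax : ℕ, IsOSeq (addE h imax) s → (∀ j, imax < j → ¬ IsOSeq (addE h j) s) →
      (∀ k : ℕ → ℕ, IsOSeq k s → mult k s = d → k ≠ addE h imax → oLT k (addE h imax)) ∧
      (∀ M M' : ℕ, IsGreatest (genusSet d s) M → IsGreatest (genusSet (d - 1) s) M' →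
        M = M' + (imax - 1))) := by
  have hh : IsOSeqMax h (d - 1) s := ⟨hOh, heh, hmax⟩
  have hd : d - 1 + 1 = d := by
    have := hOh.apply_le_mult 0
    rw [hOh.1] at this
    omega
  refine ⟨⟨1, le_rfl, by omega, isOSeq_addE hOh one_ne_zero (by omega) fun _ _ _ => by omega⟩,
    fun imax himax hlast => ?_⟩
  have hH := isOSeqMax_addE hh himax hlast
  rw [hd] at hH
  refine ⟨hH.2.2, fun M M' hM hM' => ?_⟩
  rw [hM.unique hH.isGreatest_genusSet, hM'.unique hh.isGreatest_genusSet,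
    genus_addE (himax.lt_of_pos (by simp [addE_apply]))]

/-- Let `d > s ≥ 3` and let `h` be the maximum, for the total order, of the
finite O-sequences of multiplicity `d-1` and length `s`. Then some `h + e_i` with
`1 ≤ i ≤ s-1` is a finite O-sequence; for the largest such index `ı`, `h + e_ı` is the
maximum of the finite O-sequences of multiplicity `d` and length `s`, and the maximal genus
in multiplicity `d` equals the maximal genus in multiplicity `d-1` plus `ı - 1`. -/
theorem stmt8 (d s : ℕ) (h : ℕ → ℕ) (hs : 3 ≤ s) (hsd : s < d)
    (hOh : IsOSeq h s) (heh : mult h s = d - 1)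
    (hmax : ∀ k : ℕ → ℕ, IsOSeq k s → mult k s = d - 1 → k ≠ h → oLT k h) :
    (∃ i, 1 ≤ i ∧ i ≤ s - 1 ∧ IsOSeq (addE h i) s) ∧
    (∀ imax : ℕ, IsOSeq (addE h imax) s → (∀ j, imax < j → ¬ IsOSeq (addE h j) s) →
      (∀ k : ℕ → ℕ, IsOSeq k s → mult k s = d → k ≠ addE h imax → oLT k (addE h imax)) ∧
      (∀ M M' : ℕ, IsGreatest (genusSet d s) M → IsGreatest (genusSet (d - 1) s) M' →
        M = M' + (imax - 1))) :=
  stmt8_general d s h hs hOh heh hmax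
end

section
/- Let d ≥ s ≥ 2 with s ≥ ⌊d/2⌋ + 1. Then every finite O-sequence h of multiplicity d and length s satisfies C(s-1, 2) ≤ g(h) ≤ C(s-1, 2) + C(d-s, 2). -/
/-!
Write `h_j = 1 + a_j` for `j < s`. Then `g(h) = C(s-1,2) + Σ_{j≥1} (j-1)·a_j` and `Σ a_j = d - s`,
which gives the lower bound. Since `1^⟨t⟩ = 1`, an O-sequence that reaches `1` in positive degree
stays `≤ 1`, so the indices `j ≥ 1` with `a_j > 0` form an initial segment `1, …, m`. A weight
distribution on an initial segment with all weights `≥ 1` has moment at most `C(total, 2)`.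
-/

theorem Nat.add_choose_two (m n : ℕ) : (m + n).choose 2 = m.choose 2 + m * n + n.choose 2 := by
  induction n with
  | zero => simp
  | succ n ih =>
    rw [← add_assoc, Nat.choose_succ_succ', Nat.choose_one_right, ih, Nat.choose_succ_succ',
      Nat.choose_one_right]
    ring

theorem Finset.sum_range_id_eq_choose_two (n : ℕ) : ∑ i ∈ Finset.range n, i = n.choose 2 :=
  (Finset.sum_range_id n).trans (Nat.choose_two_right n).symm

/-- Adding the weight `a m` at position `m` raises the moment by `m * a m`, whereas
`C(N + a m, 2) - C(N, 2) ≥ N * a m`, and `m ≤ N` since every earlier weight is at least `1`. -/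
theorem sum_range_mul_le_choose_sum (a : ℕ → ℕ) (ha : ∀ i j, i ≤ j → a j ≠ 0 → a i ≠ 0)
    (m : ℕ) : ∑ j ∈ Finset.range m, j * a j ≤ (∑ j ∈ Finset.range m, a j).choose 2 := by
  induction m with
  | zero => simp
  | succ m ih =>
    rw [Finset.sum_range_succ, Finset.sum_range_succ, Nat.add_choose_two]
    by_cases ham : a m = 0
    · simp [ham, ih]
    have hm : m ≤ ∑ j ∈ Finset.range m, a j := by
      calc m = ∑ _j ∈ Finset.range m, 1 := by simp
        _ ≤ ∑ j ∈ Finset.range m, a j := Finset.sum_le_sum fun j hj =>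
          Nat.one_le_iff_ne_zero.mpr (ha j m (Finset.mem_range.mp hj).le ham)
    have := Nat.mul_le_mul_right (a m) hm
    omega

lemma mac_zero (t : ℕ) : mac t 0 = 0 := by cases t <;> simp [mac]

lemma mac_one (t : ℕ) : mac (t + 1) 1 = 1 := by
  have hfg : Nat.findGreatest (fun n => Nat.choose n (t + 1) ≤ 1) (1 + t + 1) = t + 1 := by
    rw [Nat.findGreatest_eq_iff]
    refine ⟨by omega, fun _ => by simp, fun n hn hn2 => ?_⟩
    obtain rfl : n = t + 2 := by omega
    rw [Nat.choose_succ_self_right]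
    omega
  rw [mac, if_neg one_ne_zero, hfg]
  simp [mac_zero]

lemma mac_le_one {t x : ℕ} (ht : 1 ≤ t) (hx : x ≤ 1) : mac t x ≤ 1 := by
  obtain ⟨t, rfl⟩ := Nat.exists_eq_add_of_le' ht
  interval_cases x
  · simp [mac_zero]
  · simp [mac_one]

namespace IsOSeq

variable {h : ℕ → ℕ} {s : ℕ}

lemma one_le (hO : IsOSeq h s) {j : ℕ} (hj : j < s) : 1 ≤ h j := (hO.2.1 j).mpr hj

lemma length_pos (hO : IsOSeq h s) : 0 < s := (hO.2.1 0).mp (by rw [hO.1]; exact one_pos)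

lemma le_one_of_le (hO : IsOSeq h s) {i j : ℕ} (hi : 1 ≤ i) (hij : i ≤ j) (h1 : h i ≤ 1) :
    h j ≤ 1 := by
  induction j, hij using Nat.le_induction with
  | base => exact h1
  | succ j hij ih => exact (hO.2.2 j (hi.trans hij)).trans (mac_le_one (hi.trans hij) ih)

lemma mult_eq (hO : IsOSeq h s) :
    mult h s = s + ∑ j ∈ Finset.range (s - 1), (h (j + 1) - 1) := by
  obtain ⟨s, rfl⟩ := Nat.exists_eq_add_of_le' hO.length_pos
  have hsplit : ∀ j ∈ Finset.range s, h (j + 1) = (h (j + 1) - 1) + 1 := fun j hj =>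
    (Nat.sub_add_cancel (hO.one_le (Nat.succ_lt_succ (Finset.mem_range.mp hj)))).symm
  rw [mult, Finset.sum_range_succ', Finset.sum_congr rfl hsplit, Finset.sum_add_distrib, hO.1]
  simp only [Finset.sum_const, Finset.card_range, smul_eq_mul, mul_one, Nat.add_sub_cancel]
  omega

lemma genus_eq (hO : IsOSeq h s) :
    genus h s = (s - 1).choose 2 + ∑ j ∈ Finset.range (s - 1), j * (h (j + 1) - 1) := by
  obtain ⟨s, rfl⟩ := Nat.exists_eq_add_of_le' hO.length_pos
  have hsplit : ∀ j ∈ Finset.range s, j * h (j + 1) = j * (h (j + 1) - 1) + j := fun j hj => by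
    have := hO.one_le (Nat.succ_lt_succ (Finset.mem_range.mp hj))
    rw [← Nat.mul_add_one, Nat.sub_add_cancel this]
  rw [genus, Finset.sum_range_succ', Finset.sum_congr rfl fun j _ => by rw [Nat.add_sub_cancel],
    Finset.sum_congr rfl hsplit, Finset.sum_add_distrib, Finset.sum_range_id_eq_choose_two]
  simp only [Nat.add_sub_cancel, zero_tsub, zero_mul, add_zero]
  omega

end IsOSeq

theorem stmt10_general (d s : ℕ)
    (h : ℕ → ℕ) (hO : IsOSeq h s) (he : mult h s = d) :
    Nat.choose (s - 1) 2 ≤ genus h s ∧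
    genus h s ≤ Nat.choose (s - 1) 2 + Nat.choose (d - s) 2 := by
  have hexcess : ∑ j ∈ Finset.range (s - 1), (h (j + 1) - 1) = d - s := by
    have := hO.mult_eq
    omega
  have hsupport : ∀ i j, i ≤ j → h (j + 1) - 1 ≠ 0 → h (i + 1) - 1 ≠ 0 := fun i j hij hj hi =>
    hj (Nat.sub_eq_zero_of_le (hO.le_one_of_le (Nat.le_add_left 1 i) (by omega)
      (Nat.le_of_sub_eq_zero hi)))
  have hmoment := sum_range_mul_le_choose_sum (fun j => h (j + 1) - 1) hsupport (s - 1)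
  rw [hexcess] at hmoment
  rw [hO.genus_eq]
  omega

/-- Let `d ≥ s ≥ 2` with `s ≥ ⌊d/2⌋ + 1`. Then every finite O-sequence of
multiplicity `d` and length `s` satisfies `C(s-1,2) ≤ g(h) ≤ C(s-1,2) + C(d-s,2)`. -/
theorem stmt10 (d s : ℕ) (hs : 2 ≤ s) (hsd : s ≤ d) (hs2 : d / 2 + 1 ≤ s)
    (h : ℕ → ℕ) (hO : IsOSeq h s) (he : mult h s = d) :
    Nat.choose (s - 1) 2 ≤ genus h s ∧
    genus h s ≤ Nat.choose (s - 1) 2 + Nat.choose (d - s) 2 :=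
  stmt10_general d s h hO he
end
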